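/- For the cubic case in dimension N = 2 with Γ_cubic(z) = (μ/(16π(1-ν)|z|³))·[[ν+1-3ν z₂²/|z|², 3ν z₁z₂/|z|²],[3ν z₁z₂/|z|², ν+1-3ν z₁²/|z|²]], the formula ψ₀(b,n) = 2∫_ℝ Γ_cubic(n + t n^⊥) b·b dt evaluates, for any unit vector n and b ∈ ℝ², to ψ₀(b,n) = (μ/4π)(|b|² + η (b·n)²) with η = ν/(1-ν). -/

import Mathlib

/-!
Along the line `z = n + t n^⊥` one has `|z|² = 1 + t²` and `z^⊥ · b = p - t q` with
`p = n^⊥ · b`, `q = n · b`, so the integrand is a combination of `⟨t⟩⁻³`, `t² ⟨t⟩⁻⁵` and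
`t ⟨t⟩⁻⁵`, where `⟨t⟩ = √(1 + t²)`. Their integrals over `ℝ` are `2`, `2/3` and `0`: the first
two because `u = t / ⟨t⟩` has `u' = ⟨t⟩⁻³` and `(u³/3)' = t² ⟨t⟩⁻⁵`, with `u → ±1`; the third
by oddness. Collecting terms and using `p² + q² = |b|²` gives the formula.
-/

open MeasureTheory Filter Topology

/-- The quadratic form `Γ_cubic(z) b · b` of the cubic interaction kernel. -/
noncomputable def Qcubic (μ ν : ℝ) (z b : ℝ × ℝ) : ℝ :=
  μ / (16 * Real.pi * (1 - ν) * Real.sqrt (z.1 ^ 2 + z.2 ^ 2) ^ 3) *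
    ((ν + 1 - 3 * ν * z.2 ^ 2 / (z.1 ^ 2 + z.2 ^ 2)) * b.1 ^ 2
      + 2 * (3 * ν * z.1 * z.2 / (z.1 ^ 2 + z.2 ^ 2)) * b.1 * b.2
      + (ν + 1 - 3 * ν * z.1 ^ 2 / (z.1 ^ 2 + z.2 ^ 2)) * b.2 ^ 2)

lemma integral_eq_zero_of_odd {G E : Type*} [MeasurableSpace G] [AddGroup G] [MeasurableNeg G]
    [NormedAddCommGroup E] [NormedSpace ℝ E] (μ : Measure G) [μ.IsNegInvariant] {f : G → E}
    (hodd : ∀ x, f (-x) = -f x) : ∫ x, f x ∂μ = 0 := by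
  have h := integral_neg_eq_self f μ
  simp only [hodd, integral_neg] at h
  have h2 : (2 : ℝ) • ∫ x, f x ∂μ = 0 := by
    rw [two_smul]
    nth_rw 1 [← h]
    exact neg_add_cancel _
  simpa using h2

lemma integral_eq_two_nsmul_of_hasDerivAt_of_odd {E : Type*} [NormedAddCommGroup E]
    [NormedSpace ℝ E] [CompleteSpace E] {F f : ℝ → E} {L : E}
    (hF : ∀ t, HasDerivAt F (f t) t) (hf : Integrable f) (hodd : ∀ t, F (-t) = -F t)
    (hL : Tendsto F atTop (𝓝 L)) : ∫ t, f t = 2 • L := by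
  have hbot : Tendsto F atBot (𝓝 (-L)) :=
    (hL.comp tendsto_neg_atBot_atTop).neg.congr fun t => by simp [hodd]
  rw [integral_of_hasDerivAt_of_tendsto hF hf hbot hL, sub_neg_eq_add, two_nsmul]

noncomputable def japaneseBracket (t : ℝ) : ℝ := Real.sqrt (1 + t ^ 2)

lemma japaneseBracket_pos (t : ℝ) : 0 < japaneseBracket t := Real.sqrt_pos.2 (by positivity)

lemma japaneseBracket_sq (t : ℝ) : japaneseBracket t ^ 2 = 1 + t ^ 2 :=
  Real.sq_sqrt (by positivity)

lemma one_le_japaneseBracket (t : ℝ) : 1 ≤ japaneseBracket t := Real.one_le_sqrt.2 (by nlinarith)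

lemma abs_le_japaneseBracket (t : ℝ) : |t| ≤ japaneseBracket t := Real.abs_le_sqrt (by nlinarith)

lemma japaneseBracket_neg (t : ℝ) : japaneseBracket (-t) = japaneseBracket t := by
  simp [japaneseBracket]

lemma continuous_inv_japaneseBracket_pow (k : ℕ) :
    Continuous fun t => (japaneseBracket t ^ k)⁻¹ :=
  ((Real.continuous_sqrt.comp (by fun_prop)).pow k).inv₀
    fun t => (pow_pos (japaneseBracket_pos t) k).ne'

lemma hasDerivAt_japaneseBracket (t : ℝ) :
    HasDerivAt japaneseBracket (t / japaneseBracket t) t := by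
  refine (((hasDerivAt_pow 2 t).const_add 1).sqrt (by positivity)).congr_deriv ?_
  rw [← japaneseBracket]
  field_simp
  norm_num

lemma hasDerivAt_div_japaneseBracket (t : ℝ) :
    HasDerivAt (fun t => t / japaneseBracket t) ((japaneseBracket t ^ 3)⁻¹) t := by
  have := (japaneseBracket_pos t).ne'
  refine ((hasDerivAt_id' t).div (hasDerivAt_japaneseBracket t) this).congr_deriv ?_
  field_simp
  linear_combination japaneseBracket_sq t

lemma hasDerivAt_div_japaneseBracket_pow_three (t : ℝ) :
    HasDerivAt (fun t => (t / japaneseBracket t) ^ 3 / 3)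
      (t ^ 2 * (japaneseBracket t ^ 5)⁻¹) t := by
  have := (japaneseBracket_pos t).ne'
  refine (((hasDerivAt_div_japaneseBracket t).pow 3).div_const 3).congr_deriv ?_
  norm_num [div_pow]
  field_simp

lemma tendsto_div_japaneseBracket_atTop :
    Tendsto (fun t => t / japaneseBracket t) atTop (𝓝 1) := by
  have h2 : Tendsto (fun t : ℝ => 1 + t ^ 2) atTop atTop :=
    tendsto_atTop_add_const_left _ 1 (tendsto_pow_atTop two_ne_zero)
  have h : Tendsto (fun t : ℝ => Real.sqrt (1 - (1 + t ^ 2)⁻¹)) atTop (𝓝 1) := by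
    simpa using ((tendsto_inv_atTop_zero.comp h2).const_sub 1).sqrt
  refine h.congr' ?_
  filter_upwards [eventually_ge_atTop 0] with t ht
  rw [japaneseBracket, ← Real.sqrt_sq ht, ← Real.sqrt_div' _ (by positivity)]
  congr 1
  field_simp
  rw [Real.sq_sqrt (by positivity)]
  ring

lemma integrable_inv_japaneseBracket_pow_three :
    Integrable fun t => (japaneseBracket t ^ 3)⁻¹ := by
  refine integrable_inv_one_add_sq.mono' (continuous_inv_japaneseBracket_pow 3).aestronglyMeasurable
    (ae_of_all _ fun t => ?_)
  rw [Real.norm_of_nonneg (inv_nonneg.2 (pow_pos (japaneseBracket_pos t) 3).le)]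
  refine inv_anti₀ (by positivity) ?_
  nlinarith [japaneseBracket_sq t, one_le_japaneseBracket t]

lemma abs_mul_inv_japaneseBracket_pow_five_le {x t : ℝ} (hx : |x| ≤ japaneseBracket t ^ 2) :
    |x * (japaneseBracket t ^ 5)⁻¹| ≤ (japaneseBracket t ^ 3)⁻¹ := by
  have := japaneseBracket_pos t
  rw [abs_mul, abs_of_pos (a := (japaneseBracket t ^ 5)⁻¹) (by positivity), show
    japaneseBracket t ^ 5 = japaneseBracket t ^ 2 * japaneseBracket t ^ 3 by ring, mul_inv,
    ← mul_assoc]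
  exact mul_le_of_le_one_left (by positivity) (mul_inv_le_one_of_le₀ hx (by positivity))

lemma integrable_mul_inv_japaneseBracket_pow_five {g : ℝ → ℝ} (hg : Continuous g)
    (hle : ∀ t, |g t| ≤ japaneseBracket t ^ 2) :
    Integrable fun t => g t * (japaneseBracket t ^ 5)⁻¹ :=
  integrable_inv_japaneseBracket_pow_three.mono'
    (hg.mul (continuous_inv_japaneseBracket_pow 5)).aestronglyMeasurable
    (ae_of_all _ fun t => abs_mul_inv_japaneseBracket_pow_five_le (hle t))

lemma integral_inv_japaneseBracket_pow_three : ∫ t, (japaneseBracket t ^ 3)⁻¹ = 2 := by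
  rw [integral_eq_two_nsmul_of_hasDerivAt_of_odd hasDerivAt_div_japaneseBracket
    integrable_inv_japaneseBracket_pow_three (fun t => by rw [japaneseBracket_neg]; ring)
    tendsto_div_japaneseBracket_atTop]
  norm_num

lemma integrable_sq_mul_inv_japaneseBracket_pow_five :
    Integrable fun t => t ^ 2 * (japaneseBracket t ^ 5)⁻¹ :=
  integrable_mul_inv_japaneseBracket_pow_five (continuous_pow 2) fun t => by
    rw [japaneseBracket_sq, abs_of_nonneg (sq_nonneg t)]
    linarith

lemma integral_sq_mul_inv_japaneseBracket_pow_five :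
    ∫ t, t ^ 2 * (japaneseBracket t ^ 5)⁻¹ = 2 / 3 := by
  rw [integral_eq_two_nsmul_of_hasDerivAt_of_odd hasDerivAt_div_japaneseBracket_pow_three
    integrable_sq_mul_inv_japaneseBracket_pow_five (fun t => by rw [japaneseBracket_neg]; ring)
    (by simpa using (tendsto_div_japaneseBracket_atTop.pow 3).div_const 3)]
  norm_num

lemma integral_mul_inv_japaneseBracket_pow_five :
    ∫ t, t * (japaneseBracket t ^ 5)⁻¹ = 0 :=
  integral_eq_zero_of_odd volume fun t => by rw [japaneseBracket_neg]; ring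

lemma integral_japaneseBracket_combination (a b c : ℝ) :
    ∫ t, (a * (japaneseBracket t ^ 3)⁻¹ + b * (t ^ 2 * (japaneseBracket t ^ 5)⁻¹)
      + c * (t * (japaneseBracket t ^ 5)⁻¹)) = 2 * a + 2 / 3 * b := by
  have h3 := integrable_inv_japaneseBracket_pow_three.const_mul a
  have h5 := integrable_sq_mul_inv_japaneseBracket_pow_five.const_mul b
  have h1 := (integrable_mul_inv_japaneseBracket_pow_five continuous_id' fun t =>
    (abs_le_japaneseBracket t).trans (le_self_pow₀ (one_le_japaneseBracket t) two_ne_zero))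
    |>.const_mul c
  have h35 : Integrable fun t => a * (japaneseBracket t ^ 3)⁻¹
      + b * (t ^ 2 * (japaneseBracket t ^ 5)⁻¹) := h3.add h5
  rw [integral_add h35 h1, integral_add h3 h5, integral_const_mul, integral_const_mul,
    integral_const_mul, integral_inv_japaneseBracket_pow_three,
    integral_sq_mul_inv_japaneseBracket_pow_five, integral_mul_inv_japaneseBracket_pow_five]
  ring

lemma Qcubic_along_line (μ ν : ℝ) {n : ℝ × ℝ} (hn : n.1 ^ 2 + n.2 ^ 2 = 1) (b : ℝ × ℝ) (t : ℝ) :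
    Qcubic μ ν (n.1 - t * n.2, n.2 + t * n.1) b =
      μ / (16 * Real.pi * (1 - ν)) *
        (((ν + 1) * (b.1 ^ 2 + b.2 ^ 2) - 3 * ν * (n.1 * b.2 - n.2 * b.1) ^ 2)
            * (japaneseBracket t ^ 3)⁻¹
          + 3 * ν * ((n.1 * b.2 - n.2 * b.1) ^ 2 - (b.1 * n.1 + b.2 * n.2) ^ 2)
            * (t ^ 2 * (japaneseBracket t ^ 5)⁻¹)
          + 6 * ν * (n.1 * b.2 - n.2 * b.1) * (b.1 * n.1 + b.2 * n.2)
            * (t * (japaneseBracket t ^ 5)⁻¹)) := by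
  have hz : (n.1 - t * n.2) ^ 2 + (n.2 + t * n.1) ^ 2 = japaneseBracket t ^ 2 := by
    rw [japaneseBracket_sq]
    linear_combination (1 + t ^ 2) * hn
  have := (japaneseBracket_pos t).ne'
  rw [Qcubic, hz, Real.sqrt_sq (japaneseBracket_pos t).le]
  field_simp
  linear_combination 3 * μ * ν / (1 - ν) * (n.2 * b.1 - n.1 * b.2) ^ 2 * japaneseBracket_sq t

theorem stmt10_general (μ ν : ℝ) (hν : ν ∈ Set.Ioo (-1 : ℝ) (1 / 2))
    (n : ℝ × ℝ) (hn : n.1 ^ 2 + n.2 ^ 2 = 1) (b : ℝ × ℝ) :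
    2 * ∫ t : ℝ, Qcubic μ ν (n.1 - t * n.2, n.2 + t * n.1) b =
      μ / (4 * Real.pi) *
        ((b.1 ^ 2 + b.2 ^ 2) + (ν / (1 - ν)) * (b.1 * n.1 + b.2 * n.2) ^ 2) := by
  have hν₁ : 1 - ν ≠ 0 := by linarith [hν.2]
  have hpq : (n.1 * b.2 - n.2 * b.1) ^ 2 + (b.1 * n.1 + b.2 * n.2) ^ 2 = b.1 ^ 2 + b.2 ^ 2 := by
    linear_combination (b.1 ^ 2 + b.2 ^ 2) * hn
  simp_rw [Qcubic_along_line μ ν hn b, integral_const_mul, integral_japaneseBracket_combination]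
  rw [← hpq]
  field_simp
  ring

theorem stmt10 (μ ν : ℝ) (hμ : 0 < μ) (hν : ν ∈ Set.Ioo (-1 : ℝ) (1 / 2))
    (n : ℝ × ℝ) (hn : n.1 ^ 2 + n.2 ^ 2 = 1) (b : ℝ × ℝ) :
    2 * ∫ t : ℝ, Qcubic μ ν (n.1 - t * n.2, n.2 + t * n.1) b =
      μ / (4 * Real.pi) *
        ((b.1 ^ 2 + b.2 ^ 2) + (ν / (1 - ν)) * (b.1 * n.1 + b.2 * n.2) ^ 2) :=
  stmt10_general μ ν hν n hn b
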